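/- The real subspace Cl^R_even(1,3) ⊕ iCl^R_odd(1,3) of the complex Clifford algebra Cl(1,3) is closed under multiplication and is isomorphic as a real algebra to Mat(4,ℝ). -/

import Mathlib

/-!
The matrices `i γ_a`, with `γ_a` the real (Majorana) Dirac matrices, satisfy the Clifford relations
of `η`, so they define a `ℂ`-algebra map `Cl(1,3) → Mat(4,ℂ)` sending the blade `e_s` to
`i^|s| γ_s`. The sixteen real matrices `γ_s` are orthogonal for `(A, B) ↦ tr (A B)`, hence a basis
of `Mat(4,ℝ)` and of `Mat(4,ℂ)`; as `dim Cl(1,3) = 16`, the map is an isomorphism. It sends the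
spanning vectors `e_s` (`|s|` even) and `i e_s` (`|s|` odd) of `Cl^ℝ_even ⊕ iCl^ℝ_odd` to `±γ_s`, so
this subspace is the preimage of the real matrices, a real subalgebra, and taking real parts
identifies it with `Mat(4,ℝ)`.
-/

open CliffordAlgebra

noncomputable def Q13 : QuadraticForm ℂ (Fin 4 → ℂ) :=
  QuadraticMap.weightedSumSquares ℂ (fun a : Fin 4 => if a = 0 then (1 : ℂ) else -1)

noncomputable def e (a : Fin 4) : CliffordAlgebra Q13 := ι Q13 (Pi.single a 1)

noncomputable def blade (s : Finset (Fin 4)) : CliffordAlgebra Q13 :=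
  ((s.sort (· ≤ ·)).map e).prod

/-- The real subspace Cl^ℝ_even(1,3) ⊕ iCl^ℝ_odd(1,3). -/
noncomputable def evenIOdd : Submodule ℝ (CliffordAlgebra Q13) :=
  Submodule.span ℝ
    ((blade '' {s | Even s.card}) ∪
      ((fun x => (Complex.I : ℂ) • x) '' (blade '' {s | ¬ Even s.card})))

section WeightedSumSquares

variable {R A κ : Type*} [CommRing R] [Ring A] [Algebra R A] [Fintype κ]

theorem sum_smul_mul_self_eq_algebraMap_of_anticomm (w : κ → R) (g : κ → A)
    (hsq : ∀ a, g a * g a = algebraMap R A (w a))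
    (hanti : ∀ a b, a ≠ b → g a * g b + g b * g a = 0) (v : κ → R) :
    (∑ a, v a • g a) * (∑ a, v a • g a) = algebraMap R A (∑ a, w a • (v a * v a)) := by
  classical
  induction (Finset.univ : Finset κ) using Finset.induction_on with
  | empty => simp
  | insert a s ha ih =>
    have hcross : v a • g a * (∑ b ∈ s, v b • g b) + (∑ b ∈ s, v b • g b) * (v a • g a) = 0 := by
      rw [Finset.mul_sum, Finset.sum_mul, ← Finset.sum_add_distrib]
      refine Finset.sum_eq_zero fun b hb => ?_
      rw [smul_mul_smul_comm, smul_mul_smul_comm, mul_comm (v b), ← smul_add,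
        hanti a b (ne_of_mem_of_not_mem hb ha).symm, smul_zero]
    have hdiag : (v a * v a) • algebraMap R A (w a) = algebraMap R A (w a • (v a * v a)) := by
      rw [Algebra.smul_def, ← map_mul, smul_eq_mul, mul_comm]
    rw [Finset.sum_insert ha, Finset.sum_insert ha, map_add, ← ih, add_mul, mul_add, mul_add,
      smul_mul_smul_comm, hsq, hdiag, ← add_assoc, add_assoc _ _ (_ * (v a • g a)), hcross,
      add_zero]

noncomputable def liftOfAnticomm (w : κ → R) (g : κ → A)
    (hsq : ∀ a, g a * g a = algebraMap R A (w a))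
    (hanti : ∀ a b, a ≠ b → g a * g b + g b * g a = 0) :
    CliffordAlgebra (QuadraticMap.weightedSumSquares R w) →ₐ[R] A :=
  lift _ ⟨Fintype.linearCombination R g, fun v => by
    rw [Fintype.linearCombination_apply, QuadraticMap.weightedSumSquares_apply]
    exact sum_smul_mul_self_eq_algebraMap_of_anticomm w g hsq hanti v⟩

theorem liftOfAnticomm_ι_single [DecidableEq κ] (w : κ → R) (g : κ → A)
    (hsq : ∀ a, g a * g a = algebraMap R A (w a))
    (hanti : ∀ a b, a ≠ b → g a * g b + g b * g a = 0) (a : κ) :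
    liftOfAnticomm w g hsq hanti (ι _ (Pi.single a 1)) = g a := by
  simp [liftOfAnticomm, Fintype.linearCombination_apply_single]

end WeightedSumSquares

theorem sort_eq_filter_finRange {n : ℕ} (s : Finset (Fin n)) :
    s.sort (· ≤ ·) = (List.finRange n).filter (· ∈ s) := by
  have hsorted : ((List.finRange n).filter (· ∈ s)).Pairwise (· ≤ ·) :=
    ((List.pairwise_lt_finRange n).imp le_of_lt).filter _
  conv_lhs => rw [show s = ((List.finRange n).filter (· ∈ s)).toFinset by ext; simp]
  exact (List.toFinset_sort _ ((List.nodup_finRange n).filter _)).2 hsorted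

theorem finrank_cliffordAlgebra {K M : Type*} [Field K] [Invertible (2 : K)] [AddCommGroup M]
    [Module K M] [FiniteDimensional K M] (Q : QuadraticForm K M) :
    Module.finrank K (CliffordAlgebra Q) = 2 ^ Module.finrank K M := by
  rw [(equivExterior Q).finrank_eq,
    Module.finrank_eq_card_basis (Module.finBasis K M).ExteriorAlgebra]
  simp

instance finiteDimensional_cliffordAlgebra {K M : Type*} [Field K] [Invertible (2 : K)]
    [AddCommGroup M] [Module K M] [FiniteDimensional K M] (Q : QuadraticForm K M) :
    FiniteDimensional K (CliffordAlgebra Q) :=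
  have := Module.Finite.of_basis (Module.finBasis K M).ExteriorAlgebra
  Module.Finite.equiv (equivExterior Q).symm

theorem Complex.I_pow_two_mul (m : ℕ) : Complex.I ^ (2 * m) = ((-1 : ℝ) ^ m : ℝ) := by
  rw [pow_mul, Complex.I_sq]; push_cast; rfl

noncomputable abbrev realMatrices (n : Type*) [Fintype n] [DecidableEq n] :
    Submodule ℝ (Matrix n n ℂ) :=
  LinearMap.range (Complex.ofRealAm.mapMatrix (m := n)).toLinearMap

section RealForm

variable {A n : Type*} [Ring A] [Algebra ℝ A] [Fintype n] [DecidableEq n]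

theorem mul_mem_and_exists_bijOn_matrix_of_map_eq_realMatrices (F : A →ₐ[ℝ] Matrix n n ℂ)
    (hF : Function.Injective F) (S : Submodule ℝ A) (hS : S.map F.toLinearMap = realMatrices n) :
    (∀ u ∈ S, ∀ v ∈ S, u * v ∈ S) ∧
    ∃ f : A →ₗ[ℝ] Matrix n n ℝ, Set.BijOn f S Set.univ ∧
      (∀ u ∈ S, ∀ v ∈ S, f (u * v) = f u * f v) ∧ f 1 = 1 := by
  set ofReal := Complex.ofRealAm.mapMatrix (m := n) (R := ℝ)
  set f := Complex.reLm.mapMatrix ∘ₗ F.toLinearMap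
  have hre : ∀ M, Complex.reLm.mapMatrix (ofReal M) = M := fun M => by ext; simp [ofReal]
  have mem_iff : ∀ u, u ∈ S ↔ ∃ M, ofReal M = F u := by
    refine fun u => ⟨fun hu => ?_, fun ⟨M, hM⟩ => ?_⟩
    · have hFu := Submodule.mem_map_of_mem (f := F.toLinearMap) hu
      rwa [hS] at hFu
    · obtain ⟨w, hw, hwu⟩ : F u ∈ S.map F.toLinearMap := hS ▸ ⟨M, hM⟩
      exact hF hwu ▸ hw
  have hreal : ∀ u ∈ S, ofReal (f u) = F u := by
    intro u hu
    obtain ⟨M, hM⟩ := (mem_iff u).1 hu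
    simp only [f, LinearMap.comp_apply, AlgHom.toLinearMap_apply, ← hM, hre]
  have hmul : ∀ u ∈ S, ∀ v ∈ S, F (u * v) = ofReal (f u * f v) := by
    intro u hu v hv
    rw [map_mul, map_mul, hreal u hu, hreal v hv]
  refine ⟨fun u hu v hv => (mem_iff _).2 ⟨_, (hmul u hu v hv).symm⟩, f,
    ⟨Set.mapsTo_univ _ _, fun u hu v hv huv => hF ?_, fun M _ => ?_⟩, fun u hu v hv => ?_, ?_⟩
  · rw [← hreal u hu, ← hreal v hv, huv]
  · obtain ⟨u, hu, hFu⟩ : ofReal M ∈ S.map F.toLinearMap := hS ▸ ⟨M, rfl⟩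
    exact ⟨u, hu, by simp only [f, LinearMap.comp_apply, hFu, hre]⟩
  · simp only [f, LinearMap.comp_apply, AlgHom.toLinearMap_apply, hmul u hu v hv, hre]
  · simp [f]

end RealForm

-- Real Dirac matrices, with integer entries so that their identities can be checked by `decide`.
def gamma : Fin 4 → Matrix (Fin 4) (Fin 4) ℤ
  | 0 => !![0, 0, 1, 0; 0, 0, 0, 1; -1, 0, 0, 0; 0, -1, 0, 0]
  | 1 => !![1, 0, 0, 0; 0, 1, 0, 0; 0, 0, -1, 0; 0, 0, 0, -1]
  | 2 => !![0, 0, 1, 0; 0, 0, 0, -1; 1, 0, 0, 0; 0, -1, 0, 0]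
  | 3 => !![0, 0, 0, 1; 0, 0, 1, 0; 0, 1, 0, 0; 1, 0, 0, 0]

theorem gamma_mul_self : ∀ a, gamma a * gamma a = if a = 0 then -1 else 1 := by
  decide +kernel

theorem gamma_anticomm : ∀ a b, a ≠ b → gamma a * gamma b + gamma b * gamma a = 0 := by
  decide +kernel

def gammaBlade (s : Finset (Fin 4)) : Matrix (Fin 4) (Fin 4) ℤ :=
  ((s.sort (· ≤ ·)).map gamma).prod

-- `Finset.sort` does not reduce in the kernel, hence the detour through `List.filter`.
theorem trace_gammaBlade_mul_self_ne_zero : ∀ s, (gammaBlade s * gammaBlade s).trace ≠ 0 := by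
  simp only [gammaBlade, sort_eq_filter_finRange]
  decide +kernel

theorem eq_of_trace_gammaBlade_mul_ne_zero :
    ∀ s t, (gammaBlade s * gammaBlade t).trace ≠ 0 → s = t := by
  suffices ∀ s t, (gammaBlade s * gammaBlade t).trace ≠ 0 → ∀ a, a ∈ s ↔ a ∈ t from
    fun s t h => Finset.ext (this s t h)
  simp only [gammaBlade, sort_eq_filter_finRange]
  decide +kernel

section CharZero

variable (K : Type*) [Field K] [CharZero K]

theorem linearIndependent_gammaBlade_map :
    LinearIndependent K fun s => (Int.castRingHom K).mapMatrix (gammaBlade s) := by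
  let B : LinearMap.BilinForm K (Matrix (Fin 4) (Fin 4) K) :=
    (LinearMap.mul K _).compr₂ (Matrix.traceLinearMap _ K K)
  have hB : ∀ s t, B ((Int.castRingHom K).mapMatrix (gammaBlade s))
      ((Int.castRingHom K).mapMatrix (gammaBlade t)) =
        ((gammaBlade s * gammaBlade t).trace : K) := by
    intro s t
    change Matrix.trace (_ * _ : Matrix (Fin 4) (Fin 4) K) = _
    rw [← map_mul, RingHom.mapMatrix_apply, ← AddMonoidHom.map_trace, eq_intCast]
  refine LinearMap.BilinForm.linearIndependent_of_iIsOrtho (B := B) (fun s t hst => ?_) fun s => ?_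
  · rw [Function.onFun, hB, Int.cast_eq_zero]
    exact not_not.1 fun h => hst (eq_of_trace_gammaBlade_mul_ne_zero s t h)
  · rw [hB, Int.cast_ne_zero]
    exact trace_gammaBlade_mul_self_ne_zero s

theorem span_gammaBlade_map :
    Submodule.span K (Set.range fun s => (Int.castRingHom K).mapMatrix (gammaBlade s)) = ⊤ :=
  (linearIndependent_gammaBlade_map K).span_eq_top_of_card_eq_finrank
    (by simp [Module.finrank_matrix])

end CharZero

def diracGamma (a : Fin 4) : Matrix (Fin 4) (Fin 4) ℂ :=
  Complex.I • (Int.castRingHom ℂ).mapMatrix (gamma a)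

theorem diracGamma_mul_self (a : Fin 4) :
    diracGamma a * diracGamma a = algebraMap ℂ _ (if a = 0 then 1 else -1) := by
  rw [diracGamma, smul_mul_smul_comm, ← map_mul, gamma_mul_self, Complex.I_mul_I]
  split_ifs <;> simp [-RingHom.mapMatrix_apply]

theorem diracGamma_anticomm (a b : Fin 4) (hab : a ≠ b) :
    diracGamma a * diracGamma b + diracGamma b * diracGamma a = 0 := by
  rw [diracGamma, diracGamma, smul_mul_smul_comm, smul_mul_smul_comm, ← map_mul, ← map_mul,
    ← smul_add, ← map_add, gamma_anticomm a b hab, map_zero, smul_zero]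

noncomputable def diracRep : CliffordAlgebra Q13 →ₐ[ℂ] Matrix (Fin 4) (Fin 4) ℂ :=
  liftOfAnticomm _ diracGamma diracGamma_mul_self diracGamma_anticomm

theorem diracRep_e (a : Fin 4) : diracRep (e a) = diracGamma a :=
  liftOfAnticomm_ι_single _ _ _ _ a

theorem diracRep_blade (s : Finset (Fin 4)) :
    diracRep (blade s) = Complex.I ^ s.card • (Int.castRingHom ℂ).mapMatrix (gammaBlade s) := by
  rw [blade, gammaBlade, map_list_prod, map_list_prod, List.map_map, List.map_map,
    ← Finset.length_sort (· ≤ ·)]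
  induction (s.sort (· ≤ ·)) with
  | nil => simp
  | cons a l ih =>
    rw [List.map_cons, List.map_cons, List.prod_cons, List.prod_cons, ih, Function.comp_apply,
      diracRep_e, diracGamma, smul_mul_smul_comm, List.length_cons, pow_succ']
    rfl

theorem diracRep_surjective : Function.Surjective diracRep := by
  refine (LinearMap.range_eq_top (f := diracRep.toLinearMap)).mp ?_
  rw [eq_top_iff, ← span_gammaBlade_map ℂ, Submodule.span_le]
  rintro _ ⟨s, rfl⟩
  refine ⟨(Complex.I ^ s.card)⁻¹ • blade s, ?_⟩
  rw [AlgHom.toLinearMap_apply, map_smul, diracRep_blade, smul_smul,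
    inv_mul_cancel₀ (pow_ne_zero _ Complex.I_ne_zero), one_smul]

theorem diracRep_injective : Function.Injective diracRep :=
  (LinearMap.injective_iff_surjective_of_finrank_eq_finrank (f := diracRep.toLinearMap)
    (by rw [finrank_cliffordAlgebra]; simp [Module.finrank_matrix])).2 diracRep_surjective

noncomputable def evenIOddBasis (s : Finset (Fin 4)) : CliffordAlgebra Q13 :=
  if Even s.card then blade s else Complex.I • blade s

theorem evenIOdd_eq_span : evenIOdd = Submodule.span ℝ (Set.range evenIOddBasis) := by
  rw [evenIOdd]
  congr 1
  ext x
  simp only [evenIOddBasis, Set.mem_union, Set.mem_image, Set.mem_ofPred_eq, Set.mem_range,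
    exists_exists_and_eq_and]
  constructor
  · rintro (⟨s, hs, rfl⟩ | ⟨s, hs, rfl⟩) <;> exact ⟨s, by simp [hs]⟩
  · rintro ⟨s, rfl⟩
    by_cases hs : Even s.card
    · exact Or.inl ⟨s, hs, by simp [hs]⟩
    · exact Or.inr ⟨s, hs, by simp [hs]⟩

theorem diracRep_evenIOddBasis (s : Finset (Fin 4)) :
    diracRep (evenIOddBasis s) =
      ((-1 : ℝ) ^ ((s.card + 1) / 2)) • (Int.castRingHom ℂ).mapMatrix (gammaBlade s) := by
  have hpow : diracRep (evenIOddBasis s) =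
      Complex.I ^ (2 * ((s.card + 1) / 2)) • (Int.castRingHom ℂ).mapMatrix (gammaBlade s) := by
    rw [evenIOddBasis]
    split_ifs with hs
    · obtain ⟨k, hk⟩ := hs
      rw [diracRep_blade, show 2 * ((s.card + 1) / 2) = s.card by omega]
    · obtain ⟨k, hk⟩ := Nat.not_even_iff_odd.1 hs
      rw [map_smul, diracRep_blade, smul_smul, ← pow_succ',
        show 2 * ((s.card + 1) / 2) = s.card + 1 by omega]
  rw [hpow, Complex.I_pow_two_mul, ← Complex.coe_algebraMap, algebraMap_smul]

theorem realMatrices_eq_span_gammaBlade :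
    realMatrices (Fin 4) =
      Submodule.span ℝ (Set.range fun s => (Int.castRingHom ℂ).mapMatrix (gammaBlade s)) := by
  rw [realMatrices, LinearMap.range_eq_map, ← span_gammaBlade_map ℝ, Submodule.map_span,
    ← Set.range_comp]
  rfl

theorem map_evenIOdd :
    evenIOdd.map (diracRep.restrictScalars ℝ).toLinearMap = realMatrices (Fin 4) := by
  rw [realMatrices_eq_span_gammaBlade, evenIOdd_eq_span, Submodule.map_span, ← Set.range_comp]
  apply le_antisymm <;> rw [Submodule.span_le] <;> rintro _ ⟨s, rfl⟩
  · rw [Function.comp_apply, AlgHom.toLinearMap_apply, AlgHom.restrictScalars_apply,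
      diracRep_evenIOddBasis]
    exact Submodule.smul_mem _ _ (Submodule.subset_span ⟨s, rfl⟩)
  · have hsign : (Int.castRingHom ℂ).mapMatrix (gammaBlade s) =
        ((-1 : ℝ) ^ ((s.card + 1) / 2)) • diracRep (evenIOddBasis s) := by
      rw [diracRep_evenIOddBasis, smul_smul, ← mul_pow, neg_one_mul, neg_neg, one_pow, one_smul]
    dsimp only
    rw [hsign]
    exact Submodule.smul_mem _ _ (Submodule.subset_span ⟨s, rfl⟩)

/-- Cl^ℝ_even(1,3) ⊕ iCl^ℝ_odd(1,3) is closed under multiplication and is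
isomorphic, as a real algebra, to Mat(4,ℝ). -/
theorem evenIOdd_closed_and_iso_mat4R :
    (∀ u ∈ evenIOdd, ∀ v ∈ evenIOdd, u * v ∈ evenIOdd) ∧
    ∃ f : CliffordAlgebra Q13 →ₗ[ℝ] Matrix (Fin 4) (Fin 4) ℝ,
      Set.BijOn f (evenIOdd : Set (CliffordAlgebra Q13)) Set.univ ∧
      (∀ u ∈ evenIOdd, ∀ v ∈ evenIOdd, f (u * v) = f u * f v) ∧
      f 1 = 1 :=
  mul_mem_and_exists_bijOn_matrix_of_map_eq_realMatrices (diracRep.restrictScalars ℝ)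
    diracRep_injective evenIOdd map_evenIOdd
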